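/- Let g : ℝ → ℂ be a Schwartz function and for ε ≥ 0 define S(ε) = ∑_{n ≥ 1} (4 + ε)^{−n} ∑_{k ∈ ℤ} cos(2π(4ⁿ − 1)·(k/(2·4ⁿ))) · g(k/(2·4ⁿ)). Then all the double series converge absolutely for ε > 0, the double series at ε = 0 converges (iterated, inner sum first), and S(ε) → S(0) as ε → 0⁺. -/

import Mathlib

open scoped Real

/-- The `n`-th inner term: `cos(2π(4ⁿ-1)·(k/(2·4ⁿ))) · g(k/(2·4ⁿ))`. -/
noncomputable def innerTerm (g : SchwartzMap ℝ ℂ) (n : ℕ) (k : ℤ) : ℂ :=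
  (Real.cos (2 * Real.pi * (4 ^ n - 1) * ((k : ℝ) / (2 * 4 ^ n))) : ℂ) *
    g ((k : ℝ) / (2 * 4 ^ n))

/-- The regularised series `S(ε)`, summing over layers `n ≥ 1`. -/
noncomputable def S (g : SchwartzMap ℝ ℂ) (ε : ℝ) : ℂ :=
  ∑' n : ℕ, (((4 + ε) ^ (-((n : ℤ) + 1)) : ℝ) : ℂ) * ∑' k : ℤ, innerTerm g (n + 1) k

/-!
Write `N = 2·4ᵐ`. Since `2π(4ᵐ - 1)k/N = kπ - 2πk/N`, the `m`-th inner term is `(-1)ᵏ h(k/N)`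
with `h x = cos(2πx) g(x)`, and both `h` and `h'` decay like `(1 + |x|)⁻²`. Comparing with
`∑ₖ (1 + |k|/N)⁻² ≤ 4N` gives `∑ₖ |h(k/N)| = O(N)`, hence absolute convergence against
`(4 + ε)⁻ᵐ`. Pairing neighbouring terms bounds the alternating sum `∑ₖ (-1)ᵏ h(k/N)` by
`½ ∑ₖ |h(k/N) - h((k+1)/N)| = O(1)` (mean value theorem), so the layers of `S ε` are dominated
by `C·4⁻ᵐ` uniformly in `ε ≥ 0`, and dominated convergence gives the limit.
-/

open Finset
open scoped SchwartzMap

section LatticeSums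

variable {N : ℝ}

lemma inv_one_add_div_sq_le_two_mul_sub (hN : 1 ≤ N) {x : ℝ} (hx : 0 ≤ x) :
    ((1 + x / N) ^ 2)⁻¹ ≤ 2 * N * ((1 + x / N)⁻¹ - (1 + (x + 1) / N)⁻¹) := by
  have hN0 : 0 < N := by linarith
  have hy : 1 ≤ 1 + x / N := le_add_of_nonneg_right (by positivity)
  rw [add_div, ← add_assoc, inv_sub_inv (by positivity) (by positivity),
    inv_le_iff_one_le_mul₀' (by positivity)]
  field_simp
  nlinarith

lemma sum_range_inv_one_add_div_sq_le (hN : 1 ≤ N) (M : ℕ) :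
    ∑ j ∈ range M, ((1 + j / N) ^ 2)⁻¹ ≤ 2 * N := by
  calc ∑ j ∈ range M, ((1 + j / N) ^ 2)⁻¹
      ≤ ∑ j ∈ range M, 2 * N * ((1 + j / N)⁻¹ - (1 + ((j + 1 : ℕ) : ℝ) / N)⁻¹) := by
        gcongr with j
        push_cast
        exact inv_one_add_div_sq_le_two_mul_sub hN j.cast_nonneg
    _ = 2 * N * (1 - (1 + (M : ℝ) / N)⁻¹) := by
        rw [← mul_sum, sum_range_sub' (fun j : ℕ => (1 + (j : ℝ) / N)⁻¹)]
        simp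
    _ ≤ 2 * N := by
        have : 0 ≤ (1 + (M : ℝ) / N)⁻¹ := by positivity
        nlinarith

lemma summable_inv_one_add_div_sq (hN : 1 ≤ N) :
    Summable fun j : ℕ => ((1 + j / N) ^ 2)⁻¹ :=
  summable_of_sum_range_le (fun _ => by positivity) (sum_range_inv_one_add_div_sq_le hN)

lemma tsum_inv_one_add_div_sq_le (hN : 1 ≤ N) :
    ∑' j : ℕ, ((1 + j / N) ^ 2)⁻¹ ≤ 2 * N :=
  Real.tsum_le_of_sum_range_le (fun _ => by positivity) (sum_range_inv_one_add_div_sq_le hN)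

lemma inv_one_add_abs_div_sq_natCast (hN : 1 ≤ N) (j : ℕ) :
    ((1 + |((j : ℤ) : ℝ) / N|) ^ 2)⁻¹ = ((1 + j / N) ^ 2)⁻¹ := by
  have hN0 : 0 < N := by linarith
  simp [abs_div, abs_of_pos hN0]

lemma inv_one_add_abs_div_sq_neg_natCast (hN : 1 ≤ N) (j : ℕ) :
    ((1 + |((-j : ℤ) : ℝ) / N|) ^ 2)⁻¹ = ((1 + j / N) ^ 2)⁻¹ := by
  have hN0 : 0 < N := by linarith
  simp [abs_div, abs_of_pos hN0]

lemma summable_inv_one_add_abs_div_sq (hN : 1 ≤ N) :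
    Summable fun k : ℤ => ((1 + |(k : ℝ) / N|) ^ 2)⁻¹ :=
  .of_nat_of_neg
    ((summable_inv_one_add_div_sq hN).congr fun j => (inv_one_add_abs_div_sq_natCast hN j).symm)
    ((summable_inv_one_add_div_sq hN).congr fun j =>
      (inv_one_add_abs_div_sq_neg_natCast hN j).symm)

lemma tsum_inv_one_add_abs_div_sq_le (hN : 1 ≤ N) :
    ∑' k : ℤ, ((1 + |(k : ℝ) / N|) ^ 2)⁻¹ ≤ 4 * N := by
  set f : ℤ → ℝ := fun k => ((1 + |(k : ℝ) / N|) ^ 2)⁻¹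
  have hpos : ∀ j : ℕ, f j = ((1 + j / N) ^ 2)⁻¹ := inv_one_add_abs_div_sq_natCast hN
  have hneg : ∀ j : ℕ, f (-j) = ((1 + j / N) ^ 2)⁻¹ := inv_one_add_abs_div_sq_neg_natCast hN
  have hs := summable_inv_one_add_div_sq hN
  rw [Summable.tsum_of_nat_of_neg (f := f) (hs.congr fun j => (hpos j).symm)
    (hs.congr fun j => (hneg j).symm), tsum_congr hpos, tsum_congr hneg]
  have := tsum_inv_one_add_div_sq_le hN
  have : 0 ≤ f 0 := by positivity
  linarith

end LatticeSums

section Samples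

variable {E : Type*} [NormedAddCommGroup E] {f : ℝ → E} {C N : ℝ}

lemma inv_one_add_abs_sq_le_four_mul {s t : ℝ} (h : |s - t| ≤ 1) :
    ((1 + |t|) ^ 2)⁻¹ ≤ 4 * ((1 + |s|) ^ 2)⁻¹ := by
  have hst : 1 + |s| ≤ 2 * (1 + |t|) := by
    have := abs_sub_abs_le_abs_sub s t
    linarith [abs_nonneg t]
  calc ((1 + |t|) ^ 2)⁻¹ ≤ (((1 + |s|) / 2) ^ 2)⁻¹ :=
        inv_anti₀ (by positivity) (pow_le_pow_left₀ (by positivity) (by linarith) 2)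
    _ = 4 * ((1 + |s|) ^ 2)⁻¹ := by field_simp; norm_num

lemma nonneg_of_norm_le_mul_inv_one_add_abs_sq (hf : ∀ x, ‖f x‖ ≤ C * ((1 + |x|) ^ 2)⁻¹) :
    0 ≤ C :=
  nonneg_of_mul_nonneg_left ((norm_nonneg _).trans (hf 0)) (by positivity)

lemma summable_norm_sample (hN : 1 ≤ N) (hf : ∀ x, ‖f x‖ ≤ C * ((1 + |x|) ^ 2)⁻¹) :
    Summable fun k : ℤ => ‖f (k / N)‖ :=
  .of_nonneg_of_le (fun _ => norm_nonneg _) (fun _ => hf _)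
    ((summable_inv_one_add_abs_div_sq hN).mul_left C)

lemma tsum_norm_sample_le (hN : 1 ≤ N) (hf : ∀ x, ‖f x‖ ≤ C * ((1 + |x|) ^ 2)⁻¹) :
    ∑' k : ℤ, ‖f (k / N)‖ ≤ 4 * C * N := by
  have hC := nonneg_of_norm_le_mul_inv_one_add_abs_sq hf
  calc ∑' k : ℤ, ‖f (k / N)‖ ≤ ∑' k : ℤ, C * ((1 + |(k : ℝ) / N|) ^ 2)⁻¹ :=
        (summable_norm_sample hN hf).tsum_le_tsum (fun _ => hf _)
          ((summable_inv_one_add_abs_div_sq hN).mul_left C)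
    _ = C * ∑' k : ℤ, ((1 + |(k : ℝ) / N|) ^ 2)⁻¹ := tsum_mul_left
    _ ≤ 4 * C * N := by
        have := mul_le_mul_of_nonneg_left (tsum_inv_one_add_abs_div_sq_le hN) hC
        linarith

variable [NormedSpace ℝ E]

lemma norm_sample_sub_sample_succ_le (hN : 1 ≤ N) (hf : Differentiable ℝ f)
    (hf' : ∀ x, ‖deriv f x‖ ≤ C * ((1 + |x|) ^ 2)⁻¹) (k : ℤ) :
    ‖f (k / N) - f ((k + 1) / N)‖ ≤ 4 * C / N * ((1 + |(k : ℝ) / N|) ^ 2)⁻¹ := by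
  have hN0 : 0 < N := by linarith
  have hC := nonneg_of_norm_le_mul_inv_one_add_abs_sq hf'
  have hstep : (k + 1 : ℝ) / N - k / N = 1 / N := by ring
  have hbound : ∀ t ∈ Set.Icc ((k : ℝ) / N) ((k + 1) / N),
      ‖deriv f t‖ ≤ 4 * C * ((1 + |(k : ℝ) / N|) ^ 2)⁻¹ := by
    intro t ht
    have hdist : |(k : ℝ) / N - t| ≤ 1 := by
      rw [abs_sub_comm, abs_of_nonneg (by linarith [ht.1])]
      have : 1 / N ≤ 1 := by rw [div_le_one hN0]; exact hN
      linarith [ht.2]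
    calc ‖deriv f t‖ ≤ C * ((1 + |t|) ^ 2)⁻¹ := hf' t
      _ ≤ C * (4 * ((1 + |(k : ℝ) / N|) ^ 2)⁻¹) :=
          mul_le_mul_of_nonneg_left (inv_one_add_abs_sq_le_four_mul hdist) hC
      _ = 4 * C * ((1 + |(k : ℝ) / N|) ^ 2)⁻¹ := by ring
  have hmvt := Convex.norm_image_sub_le_of_norm_hasDerivWithin_le
    (fun t _ => (hf t).hasDerivAt.hasDerivWithinAt) hbound (convex_Icc _ _)
    (Set.left_mem_Icc.2 (by gcongr; linarith)) (Set.right_mem_Icc.2 (by gcongr; linarith))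
  rw [norm_sub_rev, hstep, Real.norm_of_nonneg (by positivity)] at hmvt
  calc _ ≤ 4 * C * ((1 + |(k : ℝ) / N|) ^ 2)⁻¹ * (1 / N) := hmvt
    _ = _ := by ring

lemma tsum_add_shift_eq_two_smul {F : ℤ → E} (hF : Summable F) :
    ∑' k : ℤ, (F k + F (k + 1)) = (2 : ℝ) • ∑' k : ℤ, F k := by
  have hshift : ∑' k : ℤ, F (k + 1) = ∑' k : ℤ, F k := (Equiv.addRight (1 : ℤ)).tsum_eq F
  have hF1 : Summable fun k : ℤ => F (k + 1) := (Equiv.addRight (1 : ℤ)).summable_iff.2 hF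
  rw [hF.tsum_add hF1, hshift, two_smul]

lemma norm_tsum_alternating_sample_le [CompleteSpace E] (hN : 1 ≤ N)
    (hs : Summable fun k : ℤ => ‖f (k / N)‖) (hf : Differentiable ℝ f)
    (hf' : ∀ x, ‖deriv f x‖ ≤ C * ((1 + |x|) ^ 2)⁻¹) :
    ‖∑' k : ℤ, (-1 : ℝ) ^ k • f (k / N)‖ ≤ 8 * C := by
  set F : ℤ → E := fun k => (-1 : ℝ) ^ k • f (k / N)
  have hF : Summable F := hs.of_norm_bounded fun k => by simp [F, norm_smul, norm_zpow]
  have hpair : ∀ k : ℤ, ‖F k + F (k + 1)‖ = ‖f (k / N) - f ((k + 1) / N)‖ := by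
    intro k
    simp only [F, zpow_add_one₀ (by norm_num : (-1 : ℝ) ≠ 0), Int.cast_add, Int.cast_one]
    rw [mul_neg_one, neg_smul, ← sub_eq_add_neg, ← smul_sub, norm_smul, norm_zpow]
    simp
  have hdiff := norm_sample_sub_sample_succ_le hN hf hf'
  have hw := (summable_inv_one_add_abs_div_sq hN).mul_left (4 * C / N)
  have hsum_pairs : Summable fun k : ℤ => ‖F k + F (k + 1)‖ :=
    .of_nonneg_of_le (fun _ => norm_nonneg _) (fun k => (hpair k).trans_le (hdiff k)) hw
  have hC := nonneg_of_norm_le_mul_inv_one_add_abs_sq hf'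
  have htwo : 2 * ‖∑' k : ℤ, F k‖ ≤ 16 * C :=
    calc 2 * ‖∑' k : ℤ, F k‖ = ‖∑' k : ℤ, (F k + F (k + 1))‖ := by
          rw [tsum_add_shift_eq_two_smul hF, norm_smul, Real.norm_two]
      _ ≤ ∑' k : ℤ, 4 * C / N * ((1 + |(k : ℝ) / N|) ^ 2)⁻¹ :=
          (norm_tsum_le_tsum_norm hsum_pairs).trans <| hsum_pairs.tsum_le_tsum
            (fun k => (hpair k).trans_le (hdiff k)) hw
      _ = 4 * C / N * ∑' k : ℤ, ((1 + |(k : ℝ) / N|) ^ 2)⁻¹ := tsum_mul_left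
      _ ≤ 4 * C / N * (4 * N) :=
          mul_le_mul_of_nonneg_left (tsum_inv_one_add_abs_div_sq_le hN) (by positivity)
      _ = 16 * C := by field_simp; ring
  linarith

end Samples

lemma SchwartzMap.exists_norm_and_norm_deriv_le {E : Type*} [NormedAddCommGroup E]
    [NormedSpace ℝ E] (f : 𝓢(ℝ, E)) :
    ∃ C, ∀ x, ‖f x‖ ≤ C * ((1 + |x|) ^ 2)⁻¹ ∧ ‖deriv f x‖ ≤ C * ((1 + |x|) ^ 2)⁻¹ := by
  refine ⟨2 ^ 2 * (Finset.Iic (2, 1)).sup (fun m => SchwartzMap.seminorm ℝ m.1 m.2) f,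
    fun x => ⟨?_, ?_⟩⟩ <;> rw [← div_eq_mul_inv, le_div_iff₀' (by positivity), ← Real.norm_eq_abs]
  · simpa using one_add_le_sup_seminorm_apply (𝕜 := ℝ) (m := (2, 1)) le_rfl zero_le_one f x
  · simpa [norm_iteratedFDeriv_eq_norm_iteratedDeriv] using
      one_add_le_sup_seminorm_apply (𝕜 := ℝ) (m := (2, 1)) le_rfl le_rfl f x

noncomputable def cosTwoPiMul (g : 𝓢(ℝ, ℂ)) (x : ℝ) : ℂ := Real.cos (2 * π * x) * g x

lemma hasDerivAt_cosTwoPiMul (g : 𝓢(ℝ, ℂ)) (x : ℝ) :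
    HasDerivAt (cosTwoPiMul g)
      (((-Real.sin (2 * π * x) * (2 * π) : ℝ) : ℂ) * g x + Real.cos (2 * π * x) * deriv g x) x :=
  (((hasDerivAt_id x).const_mul (2 * π)).cos.ofReal_comp.mul (g.hasDerivAt x)).congr_deriv
    (by simp)

lemma exists_norm_cosTwoPiMul_and_norm_deriv_le (g : 𝓢(ℝ, ℂ)) :
    ∃ C, ∀ x, ‖cosTwoPiMul g x‖ ≤ C * ((1 + |x|) ^ 2)⁻¹ ∧
      ‖deriv (cosTwoPiMul g) x‖ ≤ C * ((1 + |x|) ^ 2)⁻¹ := by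
  obtain ⟨C, hC⟩ := g.exists_norm_and_norm_deriv_le
  have hC0 := nonneg_of_norm_le_mul_inv_one_add_abs_sq fun x => (hC x).1
  refine ⟨(2 * π + 1) * C, fun x => ⟨?_, ?_⟩⟩
  · calc ‖cosTwoPiMul g x‖ ≤ ‖g x‖ := by
          rw [cosTwoPiMul, norm_mul, Complex.norm_real, Real.norm_eq_abs]
          exact mul_le_of_le_one_left (norm_nonneg _) (Real.abs_cos_le_one _)
      _ ≤ C * ((1 + |x|) ^ 2)⁻¹ := (hC x).1
      _ ≤ (2 * π + 1) * C * ((1 + |x|) ^ 2)⁻¹ := by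
          gcongr; nlinarith [Real.pi_pos]
  · rw [(hasDerivAt_cosTwoPiMul g x).deriv]
    have hsin := Real.abs_sin_le_one (2 * π * x)
    have hcos := Real.abs_cos_le_one (2 * π * x)
    calc _ ≤ 2 * π * ‖g x‖ + ‖deriv g x‖ := by
          refine (norm_add_le _ _).trans (add_le_add ?_ ?_)
          · simp only [norm_mul, Complex.norm_real, Real.norm_eq_abs, abs_neg, abs_two,
              abs_of_pos Real.pi_pos]
            rw [mul_assoc]
            exact mul_le_of_le_one_left (by positivity) hsin
          · rw [norm_mul, Complex.norm_real, Real.norm_eq_abs]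
            exact mul_le_of_le_one_left (norm_nonneg _) hcos
      _ ≤ 2 * π * (C * ((1 + |x|) ^ 2)⁻¹) + C * ((1 + |x|) ^ 2)⁻¹ := by
          gcongr
          exacts [(hC x).1, (hC x).2]
      _ = (2 * π + 1) * C * ((1 + |x|) ^ 2)⁻¹ := by ring

lemma innerTerm_eq_neg_one_zpow_smul (g : 𝓢(ℝ, ℂ)) (m : ℕ) (k : ℤ) :
    innerTerm g m k = (-1 : ℝ) ^ k • cosTwoPiMul g (k / (2 * 4 ^ m)) := by
  have harg : 2 * π * ((4 : ℝ) ^ m - 1) * (k / (2 * 4 ^ m)) =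
      k * π - 2 * π * (k / (2 * 4 ^ m)) := by
    field_simp
  rw [innerTerm, harg, Real.cos_int_mul_pi_sub, cosTwoPiMul, Complex.real_smul]
  push_cast
  ring

lemma one_le_two_mul_four_pow (m : ℕ) : (1 : ℝ) ≤ 2 * 4 ^ m := by
  have := one_le_pow₀ (n := m) (by norm_num : (1 : ℝ) ≤ 4)
  linarith

lemma norm_innerTerm (g : 𝓢(ℝ, ℂ)) (m : ℕ) (k : ℤ) :
    ‖innerTerm g m k‖ = ‖cosTwoPiMul g (k / (2 * 4 ^ m))‖ := by
  rw [innerTerm_eq_neg_one_zpow_smul, norm_smul, norm_zpow, norm_neg, norm_one, one_zpow, one_mul]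

lemma summable_norm_innerTerm (g : 𝓢(ℝ, ℂ)) (m : ℕ) :
    Summable fun k : ℤ => ‖innerTerm g m k‖ := by
  obtain ⟨C, hC⟩ := exists_norm_cosTwoPiMul_and_norm_deriv_le g
  simpa only [norm_innerTerm] using
    summable_norm_sample (one_le_two_mul_four_pow m) fun x => (hC x).1

lemma exists_tsum_norm_innerTerm_le (g : 𝓢(ℝ, ℂ)) :
    ∃ C, ∀ m, ∑' k : ℤ, ‖innerTerm g m k‖ ≤ C * 4 ^ m := by
  obtain ⟨C, hC⟩ := exists_norm_cosTwoPiMul_and_norm_deriv_le g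
  refine ⟨8 * C, fun m => ?_⟩
  simp only [norm_innerTerm]
  exact (tsum_norm_sample_le (one_le_two_mul_four_pow m) fun x => (hC x).1).trans_eq (by ring)

lemma exists_norm_tsum_innerTerm_le (g : 𝓢(ℝ, ℂ)) :
    ∃ C, ∀ m, ‖∑' k : ℤ, innerTerm g m k‖ ≤ C := by
  obtain ⟨C, hC⟩ := exists_norm_cosTwoPiMul_and_norm_deriv_le g
  refine ⟨8 * C, fun m => ?_⟩
  have hs : Summable fun k : ℤ => ‖cosTwoPiMul g (k / (2 * 4 ^ m))‖ := by
    simpa only [norm_innerTerm] using summable_norm_innerTerm g m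
  simpa only [innerTerm_eq_neg_one_zpow_smul] using
    norm_tsum_alternating_sample_le (one_le_two_mul_four_pow m) hs
      (fun x => (hasDerivAt_cosTwoPiMul g x).differentiableAt) fun x => (hC x).2

lemma norm_ofReal_zpow_neg_succ {a : ℝ} (ha : 0 < a) (n : ℕ) :
    ‖((a ^ (-((n : ℤ) + 1)) : ℝ) : ℂ)‖ = a⁻¹ ^ (n + 1) := by
  rw [Complex.norm_real, Real.norm_of_nonneg (by positivity), ← Nat.cast_succ, zpow_neg,
    zpow_natCast, inv_pow]

lemma summable_norm_doubleSeries (g : 𝓢(ℝ, ℂ)) {ε : ℝ} (hε : 0 < ε) :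
    Summable fun p : ℕ × ℤ =>
      ‖(((4 + ε) ^ (-((p.1 : ℤ) + 1)) : ℝ) : ℂ) * innerTerm g (p.1 + 1) p.2‖ := by
  obtain ⟨C, hC⟩ := exists_tsum_norm_innerTerm_le g
  have h4ε : 0 < 4 + ε := by linarith
  set r := 4 / (4 + ε)
  have hr : r < 1 := (div_lt_one h4ε).2 (by linarith)
  refine (summable_prod_of_nonneg fun _ => norm_nonneg _).2 ⟨fun n => ?_, ?_⟩
  · simpa only [norm_mul] using (summable_norm_innerTerm g (n + 1)).mul_left _
  refine .of_nonneg_of_le (fun _ => tsum_nonneg fun _ => norm_nonneg _) (fun n => ?_)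
    (((summable_nat_add_iff 1).2 (summable_geometric_of_lt_one (by positivity) hr)).mul_left C)
  simp only [norm_mul, tsum_mul_left, norm_ofReal_zpow_neg_succ h4ε]
  calc (4 + ε)⁻¹ ^ (n + 1) * ∑' k : ℤ, ‖innerTerm g (n + 1) k‖
      ≤ (4 + ε)⁻¹ ^ (n + 1) * (C * 4 ^ (n + 1)) := by gcongr; exact hC _
    _ = C * r ^ (n + 1) := by rw [div_pow, inv_pow]; ring

lemma exists_norm_layer_le (g : 𝓢(ℝ, ℂ)) :
    ∃ C, ∀ ε : ℝ, 0 ≤ ε → ∀ n : ℕ,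
      ‖(((4 + ε) ^ (-((n : ℤ) + 1)) : ℝ) : ℂ) * ∑' k : ℤ, innerTerm g (n + 1) k‖ ≤
        C * 4⁻¹ ^ (n + 1) := by
  obtain ⟨C, hC⟩ := exists_norm_tsum_innerTerm_le g
  refine ⟨C, fun ε hε n => ?_⟩
  rw [norm_mul, norm_ofReal_zpow_neg_succ (by linarith), mul_comm C]
  exact mul_le_mul (by gcongr; linarith) (hC _) (norm_nonneg _) (by positivity)

/-- The regularisation statement: for `ε > 0` the double series converges absolutely,
at `ε = 0` the iterated series converges (inner sums first), and `S(ε) → S(0)` as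
`ε → 0⁺`. -/
theorem regularisation (g : SchwartzMap ℝ ℂ) :
    (∀ ε : ℝ, 0 < ε → Summable (fun p : ℕ × ℤ =>
      ‖(((4 + ε) ^ (-((p.1 : ℤ) + 1)) : ℝ) : ℂ) * innerTerm g (p.1 + 1) p.2‖)) ∧
    (∀ n : ℕ, Summable (fun k : ℤ => innerTerm g (n + 1) k)) ∧
    Summable (fun n : ℕ =>
      (((4 : ℝ) ^ (-((n : ℤ) + 1)) : ℝ) : ℂ) * ∑' k : ℤ, innerTerm g (n + 1) k) ∧
    Filter.Tendsto (fun ε : ℝ => S g ε) (nhdsWithin 0 (Set.Ioi 0)) (nhds (S g 0)) := by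
  obtain ⟨C, hC⟩ := exists_norm_layer_le g
  have hbound : Summable fun n : ℕ => C * 4⁻¹ ^ (n + 1) :=
    ((summable_nat_add_iff 1).2
      (summable_geometric_of_lt_one (by norm_num) (by norm_num))).mul_left C
  refine ⟨fun ε hε => summable_norm_doubleSeries g hε,
    fun n => (summable_norm_innerTerm g (n + 1)).of_norm,
    .of_norm_bounded hbound fun n => by simpa using hC 0 le_rfl n, ?_⟩
  refine tendsto_tsum_of_dominated_convergence hbound (fun n => ?_)
    (eventually_nhdsWithin_of_forall fun ε hε => hC ε (le_of_lt hε))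
  have hcont : ContinuousAt (fun ε : ℝ =>
      (((4 + ε) ^ (-((n : ℤ) + 1)) : ℝ) : ℂ) * ∑' k : ℤ, innerTerm g (n + 1) k) 0 := by
    fun_prop (disch := norm_num)
  exact hcont.tendsto.mono_left nhdsWithin_le_nhds
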